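/- Let m, n ∈ ℤ and let α, β : ℝ → ℂ be smooth functions with α(θ + 2π) = α(θ) and β(θ + 2π) = β(θ) for all θ. Then exp{ (1/(2πi)) ( ∫₀^{2π} (i m θ + α(θ)) · (i n + β'(θ)) dθ − 2πi·m·β(0) ) } = (−1)^{mn} · exp( n·α̂(0) − m·β̂(0) + ∑_{k ∈ ℤ} k·α̂(−k)·β̂(k) ), where the series ∑_{k∈ℤ} k·α̂(−k)·β̂(k) converges absolutely. (This is the Fourier expansion of Beilinson's monodromy formula exp{(1/2πi)(∫ log p d log q − log q(1) ∫ d log p)} for p(θ) = e^{imθ + α(θ)} and q(θ) = e^{inθ + β(θ)}, which have winding numbers m and n respectively.) -/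

import Mathlib

noncomputable section

open Real Complex MeasureTheory intervalIntegral Set Function

def fc (q : ℝ → ℂ) (k : ℤ) : ℂ :=
  (1 / (2 * (Real.pi : ℂ))) *
    ∫ θ in (0 : ℝ)..(2 * Real.pi), q θ * Complex.exp (-(Complex.I * (k : ℂ) * (θ : ℂ)))

instance : Fact ((0:ℝ) < 2 * Real.pi) := ⟨Real.two_pi_pos⟩

theorem fc_eq (q : ℝ → ℂ) (k : ℤ) : fc q k = fourierCoeffOn Real.two_pi_pos q k := by
  rw [fourierCoeffOn_eq_integral, fc, real_smul]
  congr 1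
  · push_cast; norm_num
  · apply intervalIntegral.integral_congr
    intro x hx
    simp only [fourier_coe_apply, smul_eq_mul]
    rw [mul_comm]
    congr 1
    push_cast
    congr 1
    rw [eq_div_iff (by norm_num [Real.pi_ne_zero] : (2*(Real.pi:ℂ) - 0) ≠ 0)]
    ring

theorem periodic_deriv_c (f : ℝ → ℂ) (hper : Function.Periodic f (2 * Real.pi)) :
    Function.Periodic (deriv f) (2 * Real.pi) := by
  intro x
  have h : deriv (fun y => f (y + 2 * Real.pi)) x = deriv f (x + 2 * Real.pi) :=
    deriv_comp_add_const f (2 * Real.pi) x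
  rw [← h]
  congr 1
  ext y
  exact hper y

theorem fc_deriv (f : ℝ → ℂ) (hf : ContDiff ℝ (↑(⊤:ℕ∞)) f) (hper : Function.Periodic f (2 * Real.pi))
    (k : ℤ) : fc (deriv f) k = Complex.I * k * fc f k := by
  have hdiff : Differentiable ℝ f := hf.differentiable (by simp)
  have hderiv : Continuous (deriv f) := (contDiff_infty_iff_deriv.mp hf).2.continuous
  have hval : f (2 * Real.pi) = f 0 := by simpa using hper 0
  rcases eq_or_ne k 0 with rfl | hk
  · have : fc (deriv f) 0 = (1 / (2 * (Real.pi:ℂ))) * (f (2*Real.pi) - f 0) := by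
      rw [fc]
      congr 1
      rw [show (∫ θ in (0:ℝ)..(2*Real.pi), deriv f θ * Complex.exp (-(Complex.I * ((0:ℤ):ℂ) * (θ:ℂ)))) = ∫ θ in (0:ℝ)..(2*Real.pi), deriv f θ from by
        apply intervalIntegral.integral_congr; intro x _; simp]
      exact intervalIntegral.integral_deriv_eq_sub (fun x _ => hdiff x) (hderiv.intervalIntegrable _ _)
    rw [this, hval]
    simp
  · have h := fourierCoeffOn_of_hasDerivAt Real.two_pi_pos hk
      (fun x _ => (hdiff x).hasDerivAt) (hderiv.intervalIntegrable 0 (2*Real.pi))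
    rw [hval, sub_self, mul_zero, zero_sub] at h
    rw [fc_eq, fc_eq, h]
    have hk' : ((k:ℂ)) ≠ 0 := Int.cast_ne_zero.mpr hk
    have hpi : ((Real.pi:ℂ)) ≠ 0 := Complex.ofReal_ne_zero.mpr Real.pi_ne_zero
    field_simp
    push_cast
    ring

theorem norm_fc_le (q : ℝ → ℂ) (k : ℤ) :
    ‖fc q k‖ ≤ (1 / (2*Real.pi)) * ∫ θ in (0:ℝ)..(2*Real.pi), ‖q θ‖ := by
  rw [fc, norm_mul]
  have h1 : ‖(1 / (2 * (Real.pi:ℂ)))‖ = 1 / (2*Real.pi) := by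
    simp [abs_of_pos Real.two_pi_pos, Real.pi_pos.le]
  rw [h1]
  gcongr
  calc ‖∫ θ in (0:ℝ)..(2*Real.pi), q θ * Complex.exp (-(Complex.I * (k:ℂ) * (θ:ℂ)))‖
      ≤ ∫ θ in (0:ℝ)..(2*Real.pi), ‖q θ * Complex.exp (-(Complex.I * (k:ℂ) * (θ:ℂ)))‖ :=
        intervalIntegral.norm_integral_le_integral_norm Real.two_pi_pos.le
    _ = ∫ θ in (0:ℝ)..(2*Real.pi), ‖q θ‖ := by
        apply intervalIntegral.integral_congr
        intro x _
        dsimp only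
        rw [norm_mul]
        have : -(Complex.I * (k:ℂ) * (x:ℂ)) = ((-(k * x) : ℝ) : ℂ) * Complex.I := by
          push_cast; ring
        rw [this, Complex.norm_exp_ofReal_mul_I, mul_one]

theorem fc_decay (f : ℝ → ℂ) (hf : ContDiff ℝ (↑(⊤:ℕ∞)) f)
    (hper : Function.Periodic f (2 * Real.pi)) :
    ∃ C, 0 ≤ C ∧ ∀ k : ℤ, k ≠ 0 → ‖fc f k‖ ≤ C / (k:ℝ)^2 := by
  have hf1 : ContDiff ℝ (↑(⊤:ℕ∞)) (deriv f) := (contDiff_infty_iff_deriv.mp hf).2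
  have hper1 := periodic_deriv_c f hper
  set C := (1 / (2*Real.pi)) * ∫ θ in (0:ℝ)..(2*Real.pi), ‖deriv (deriv f) θ‖ with hC
  have hC0 : 0 ≤ C := by
    apply mul_nonneg (by positivity)
    apply intervalIntegral.integral_nonneg Real.two_pi_pos.le
    intro x _; positivity
  refine ⟨C, hC0, fun k hk => ?_⟩
  have h2 : fc (deriv (deriv f)) k = Complex.I * k * (Complex.I * k * fc f k) := by
    rw [fc_deriv _ hf1 hper1 k, fc_deriv _ hf hper k]
  have hnorm : ‖fc (deriv (deriv f)) k‖ = (k:ℝ)^2 * ‖fc f k‖ := by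
    rw [h2]
    simp only [norm_mul, Complex.norm_I, one_mul, Complex.norm_intCast]
    rw [← mul_assoc, ← abs_mul, abs_mul_self]
    ring
  rw [le_div_iff₀ (by positivity : (0:ℝ) < (k:ℝ)^2)]
  have := norm_fc_le (deriv (deriv f)) k
  rw [hnorm] at this
  linarith

theorem summable_aux (α β : ℝ → ℂ) (hα : ContDiff ℝ (↑(⊤:ℕ∞)) α) (hβ : ContDiff ℝ (↑(⊤:ℕ∞)) β)
    (hαper : Function.Periodic α (2 * Real.pi)) (hβper : Function.Periodic β (2 * Real.pi)) :
    Summable (fun k : ℤ => ‖(k : ℂ) * fc α (-k) * fc β k‖) := by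
  obtain ⟨Ca, hCa0, hCa⟩ := fc_decay α hα hαper
  obtain ⟨Cb, hCb0, hCb⟩ := fc_decay β hβ hβper
  have hsum : Summable (fun k : ℤ => Ca * Cb * (1 / (k:ℝ)^2)) :=
    (summable_one_div_int_pow.mpr one_lt_two).mul_left _
  apply Summable.of_nonneg_of_le (fun k => norm_nonneg _) _ hsum
  intro k
  rcases eq_or_ne k 0 with rfl | hk
  · simp
  · have hk1 : (1:ℝ) ≤ |(k:ℝ)| := by
      rw [← Int.cast_abs]
      exact_mod_cast Int.one_le_abs hk
    have hkpos : (0:ℝ) < (k:ℝ)^2 := by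
      have : ((k:ℝ)) ≠ 0 := Int.cast_ne_zero.mpr hk
      positivity
    have h1 : ‖(k : ℂ) * fc α (-k) * fc β k‖ = |(k:ℝ)| * ‖fc α (-k)‖ * ‖fc β k‖ := by
      simp [norm_mul, Complex.norm_intCast]
    rw [h1]
    have ha := hCa (-k) (neg_ne_zero.mpr hk)
    have hb := hCb k hk
    rw [show ((-k:ℤ):ℝ)^2 = (k:ℝ)^2 by push_cast; ring] at ha
    have habs : |(k:ℝ)| ≤ (k:ℝ)^2 := by
      rw [← _root_.sq_abs]
      nlinarith [hk1]
    have hkc : ((k:ℝ)) ≠ 0 := Int.cast_ne_zero.mpr hk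
    calc |(k:ℝ)| * ‖fc α (-k)‖ * ‖fc β k‖
        ≤ ((k:ℝ)^2 * (Ca / (k:ℝ)^2)) * (Cb / (k:ℝ)^2) :=
          mul_le_mul (mul_le_mul habs ha (norm_nonneg _) (sq_nonneg _)) hb (norm_nonneg _)
            (mul_nonneg (sq_nonneg _) (div_nonneg hCa0 (sq_nonneg _)))
    _ = Ca * Cb * (1 / (k:ℝ)^2) := by field_simp

theorem summable_norm_fc (f : ℝ → ℂ) (hf : ContDiff ℝ (↑(⊤:ℕ∞)) f)
    (hper : Function.Periodic f (2 * Real.pi)) : Summable (fun k : ℤ => ‖fc f k‖) := by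
  obtain ⟨C, hC0, hC⟩ := fc_decay f hf hper
  have h1 : Summable (fun k : ℤ => C * (1/(k:ℝ)^2)) :=
    (summable_one_div_int_pow.mpr one_lt_two).mul_left _
  have h2 : Summable (fun k : ℤ => if k = 0 then ‖fc f 0‖ else 0) :=
    (hasSum_ite_eq (0:ℤ) (‖fc f 0‖)).summable
  apply Summable.of_nonneg_of_le (fun k => norm_nonneg _) _ (h1.add h2)
  intro k
  rcases eq_or_ne k 0 with rfl | hk
  · simp
  · have := hC k hk
    simp only [if_neg hk, add_zero]
    calc ‖fc f k‖ ≤ C / (k:ℝ)^2 := this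
    _ = C * (1/(k:ℝ)^2) := by ring

theorem parseval_aux (α g : ℝ → ℂ) (hαc : Continuous α) (hgc : Continuous g)
    (hgper : Function.Periodic g (2 * Real.pi))
    (hsum : Summable (fun k : ℤ => ‖fc g k‖)) :
    (∫ θ in (0:ℝ)..(2*Real.pi), α θ * g θ)
      = ∑' k : ℤ, fc g k * (2 * (Real.pi:ℂ) * fc α (-k)) := by
  set T := 2 * Real.pi with hT
  have hT0 : (0:ℝ) < T := Real.two_pi_pos
  -- the continuous lift of g to the circle
  have hg0 : g 0 = g (0 + T) := by rw [zero_add, ← hgper 0, zero_add]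
  have hGcont : Continuous (AddCircle.liftIco T 0 g) :=
    AddCircle.liftIco_continuous hg0 hgc.continuousOn
  set G : C(AddCircle T, ℂ) := ⟨AddCircle.liftIco T 0 g, hGcont⟩ with hG
  have hGcoeff : ∀ k : ℤ, fourierCoeff (⇑G) k = fc g k := by
    intro k
    show fourierCoeff (AddCircle.liftIco T 0 g) k = fc g k
    rw [fourierCoeff_liftIco_eq, fc_eq]
    simp [zero_add]
  have hsumG : Summable (fourierCoeff (⇑G)) := by
    apply Summable.of_norm
    simp only [hGcoeff]
    exact hsum
  have hpt : ∀ θ : ℝ, θ ∈ Set.Ioo (0:ℝ) T →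
      HasSum (fun k : ℤ => fc g k * Complex.exp (Complex.I * k * θ)) (g θ) := by
    intro θ hθ
    have h := has_pointwise_sum_fourier_series_of_summable hsumG (θ : AddCircle T)
    have hGθ : G (θ : AddCircle T) = g θ :=
      AddCircle.liftIco_zero_coe_apply ⟨hθ.1.le, hθ.2⟩
    rw [hGθ] at h
    have heq : (fun k : ℤ => fourierCoeff (⇑G) k • fourier k (θ : AddCircle T))
        = fun k : ℤ => fc g k * Complex.exp (Complex.I * k * θ) := by
      funext k
      rw [hGcoeff, smul_eq_mul, fourier_coe_apply]
      congr 1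
      congr 1
      push_cast [hT]
      rw [div_eq_iff (by norm_num [Real.pi_ne_zero] : 2*(Real.pi:ℂ) ≠ 0)]
      ring
    rwa [heq] at h
  -- interchange sum and integral
  set F : ℤ → ℝ → ℂ := fun k θ => fc g k * Complex.exp (Complex.I * k * θ) * α θ with hF
  have hFcont : ∀ k : ℤ, Continuous (F k) := by
    intro k
    exact (continuous_const.mul (Complex.continuous_exp.comp
      (continuous_const.mul Complex.continuous_ofReal))).mul hαc
  have hFint : ∀ k : ℤ, Integrable (F k) (volume.restrict (Set.Ioo (0:ℝ) T)) :=
    fun k => ((hFcont k).integrableOn_Icc).mono_set Set.Ioo_subset_Icc_self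
  have hFnorm : ∀ (k : ℤ) (θ : ℝ), ‖F k θ‖ = ‖fc g k‖ * ‖α θ‖ := by
    intro k θ
    rw [hF]
    dsimp only
    rw [norm_mul, norm_mul]
    have : Complex.I * k * θ = ((k * θ : ℝ) : ℂ) * Complex.I := by push_cast; ring
    rw [this, Complex.norm_exp_ofReal_mul_I, mul_one]
  have hFsum : Summable fun k : ℤ => ∫ θ in Set.Ioo (0:ℝ) T, ‖F k θ‖ := by
    have : (fun k : ℤ => ∫ θ in Set.Ioo (0:ℝ) T, ‖F k θ‖)
        = fun k : ℤ => ‖fc g k‖ * ∫ θ in Set.Ioo (0:ℝ) T, ‖α θ‖ := by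
      funext k
      simp_rw [hFnorm k]
      exact MeasureTheory.integral_const_mul _ _
    rw [this]
    exact hsum.mul_right _
  have hswap := MeasureTheory.hasSum_integral_of_summable_integral_norm hFint hFsum
  have hinner : ∫ θ in Set.Ioo (0:ℝ) T, (∑' k : ℤ, F k θ)
      = ∫ θ in Set.Ioo (0:ℝ) T, α θ * g θ := by
    apply MeasureTheory.setIntegral_congr_fun measurableSet_Ioo
    intro θ hθ
    have := ((hpt θ hθ).mul_right (α θ)).tsum_eq
    simpa [hF, mul_comm] using this
  rw [hinner] at hswap
  have hterm : ∀ k : ℤ, (∫ θ in Set.Ioo (0:ℝ) T, F k θ)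
      = fc g k * (2 * (Real.pi:ℂ) * fc α (-k)) := by
    intro k
    rw [hF]
    dsimp only
    rw [show (fun θ : ℝ => fc g k * Complex.exp (Complex.I * k * θ) * α θ)
        = fun θ : ℝ => fc g k * (Complex.exp (Complex.I * k * θ) * α θ) from by funext θ; ring]
    rw [MeasureTheory.integral_const_mul]
    congr 1
    rw [fc, ← mul_assoc, mul_one_div, div_self (by norm_num [Real.pi_ne_zero] : 2*(Real.pi:ℂ) ≠ 0), one_mul]
    rw [intervalIntegral.integral_of_le hT0.le, MeasureTheory.integral_Ioc_eq_integral_Ioo]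
    apply MeasureTheory.setIntegral_congr_fun measurableSet_Ioo
    intro θ _
    rw [mul_comm]
    congr 1
    push_cast
    ring
  rw [funext hterm] at hswap
  rw [intervalIntegral.integral_of_le hT0.le, MeasureTheory.integral_Ioc_eq_integral_Ioo]
  exact hswap.tsum_eq.symm

theorem int_alpha_dbeta (α β : ℝ → ℂ) (hα : ContDiff ℝ (↑(⊤:ℕ∞)) α)
    (hβ : ContDiff ℝ (↑(⊤:ℕ∞)) β)
    (hαper : Function.Periodic α (2 * Real.pi)) (hβper : Function.Periodic β (2 * Real.pi)) :
    (∫ θ in (0:ℝ)..(2*Real.pi), α θ * deriv β θ)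
      = 2 * (Real.pi:ℂ) * Complex.I * ∑' k : ℤ, (k:ℂ) * fc α (-k) * fc β k := by
  have hgsm : ContDiff ℝ (↑(⊤:ℕ∞)) (deriv β) := (contDiff_infty_iff_deriv.mp hβ).2
  have hgper := periodic_deriv_c β hβper
  rw [parseval_aux α (deriv β) hα.continuous hgsm.continuous hgper
    (summable_norm_fc _ hgsm hgper)]
  rw [show (fun k : ℤ => fc (deriv β) k * (2*(Real.pi:ℂ)*fc α (-k)))
      = fun k : ℤ => (2*(Real.pi:ℂ)*Complex.I) * ((k:ℂ) * fc α (-k) * fc β k) from by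
    funext k; rw [fc_deriv β hβ hβper]; ring]
  exact tsum_mul_left

theorem two_pi_fc_zero (q : ℝ → ℂ) : (2*(Real.pi:ℂ)) * fc q 0 = ∫ θ in (0:ℝ)..(2*Real.pi), q θ := by
  rw [fc, ← mul_assoc, mul_one_div,
    div_self (by norm_num [Real.pi_ne_zero] : 2*(Real.pi:ℂ) ≠ 0), one_mul]
  apply intervalIntegral.integral_congr
  intro θ _
  simp

theorem stmt_4 (m n : ℤ) (α β : ℝ → ℂ) (hα : ContDiff ℝ (⊤ : ℕ∞) α) (hβ : ContDiff ℝ (⊤ : ℕ∞) β)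
    (hαper : ∀ θ, α (θ + 2 * Real.pi) = α θ) (hβper : ∀ θ, β (θ + 2 * Real.pi) = β θ) :
    Summable (fun k : ℤ => ‖(k : ℂ) * fc α (-k) * fc β k‖) ∧
    Complex.exp ((2 * (Real.pi : ℂ) * Complex.I)⁻¹ *
        ((∫ θ in (0 : ℝ)..(2 * Real.pi),
            (Complex.I * (m : ℂ) * (θ : ℂ) + α θ) * (Complex.I * (n : ℂ) + deriv β θ))
          - 2 * (Real.pi : ℂ) * Complex.I * (m : ℂ) * β 0))
      = (-1 : ℂ) ^ (m * n) *
          Complex.exp ((n : ℂ) * fc α 0 - (m : ℂ) * fc β 0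
            + ∑' k : ℤ, (k : ℂ) * fc α (-k) * fc β k) := by
  have hα' : ContDiff ℝ (↑(⊤:ℕ∞)) α := hα.of_le (by simp)
  have hβ' : ContDiff ℝ (↑(⊤:ℕ∞)) β := hβ.of_le (by simp)
  have hαp : Function.Periodic α (2 * Real.pi) := hαper
  have hβp : Function.Periodic β (2 * Real.pi) := hβper
  have hg : Continuous (deriv β) := (contDiff_infty_iff_deriv.mp hβ').2.continuous
  refine ⟨summable_aux α β hα' hβ' hαp hβp, ?_⟩
  -- integrability of the four pieces
  have hi1 : IntervalIntegrable (fun θ : ℝ => (Complex.I*(m:ℂ)*(Complex.I*(n:ℂ)))*(θ:ℂ))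
      MeasureTheory.volume 0 (2*Real.pi) :=
    (continuous_const.mul Complex.continuous_ofReal).intervalIntegrable _ _
  have hi2 : IntervalIntegrable (fun θ : ℝ => Complex.I*(m:ℂ)*((θ:ℂ)*deriv β θ))
      MeasureTheory.volume 0 (2*Real.pi) :=
    (continuous_const.mul (Complex.continuous_ofReal.mul hg)).intervalIntegrable _ _
  have hi3 : IntervalIntegrable (fun θ : ℝ => (Complex.I*(n:ℂ))*α θ)
      MeasureTheory.volume 0 (2*Real.pi) :=
    (continuous_const.mul hα'.continuous).intervalIntegrable _ _
  have hi4 : IntervalIntegrable (fun θ : ℝ => α θ * deriv β θ)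
      MeasureTheory.volume 0 (2*Real.pi) :=
    (hα'.continuous.mul hg).intervalIntegrable _ _
  -- split the integral
  have hsplit : (∫ θ in (0:ℝ)..(2*Real.pi),
        (Complex.I * (m:ℂ) * (θ:ℂ) + α θ) * (Complex.I * (n:ℂ) + deriv β θ))
      = (∫ θ in (0:ℝ)..(2*Real.pi), (Complex.I*(m:ℂ)*(Complex.I*(n:ℂ)))*(θ:ℂ))
        + ((∫ θ in (0:ℝ)..(2*Real.pi), Complex.I*(m:ℂ)*((θ:ℂ)*deriv β θ))
        + ((∫ θ in (0:ℝ)..(2*Real.pi), (Complex.I*(n:ℂ))*α θ)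
        + ∫ θ in (0:ℝ)..(2*Real.pi), α θ * deriv β θ)) := by
    rw [← intervalIntegral.integral_add hi3 hi4, ← intervalIntegral.integral_add hi2 (hi3.add hi4),
      ← intervalIntegral.integral_add hi1 (hi2.add (hi3.add hi4))]
    apply intervalIntegral.integral_congr
    intro θ _
    ring
  -- value of the first piece
  have hv1 : (∫ θ in (0:ℝ)..(2*Real.pi), (Complex.I*(m:ℂ)*(Complex.I*(n:ℂ)))*(θ:ℂ))
      = (Complex.I*(m:ℂ)*(Complex.I*(n:ℂ))) * ((2*Real.pi)^2/2 : ℝ) := by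
    rw [intervalIntegral.integral_const_mul]
    congr 1
    rw [intervalIntegral.integral_ofReal (f := fun x : ℝ => x), integral_id]
    norm_num
  -- value of the second piece (integration by parts)
  have hv2 : (∫ θ in (0:ℝ)..(2*Real.pi), Complex.I*(m:ℂ)*((θ:ℂ)*deriv β θ))
      = Complex.I*(m:ℂ)*((2*Real.pi:ℝ)*β 0 - (2*(Real.pi:ℂ)) * fc β 0) := by
    rw [intervalIntegral.integral_const_mul]
    congr 1
    have hu : ∀ x ∈ Set.uIcc (0:ℝ) (2*Real.pi), HasDerivAt (fun θ : ℝ => (θ:ℂ)) 1 x := by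
      intro x _
      simpa using (hasDerivAt_id x).ofReal_comp
    have hv : ∀ x ∈ Set.uIcc (0:ℝ) (2*Real.pi), HasDerivAt β (deriv β x) x := by
      intro x _
      exact ((hβ'.differentiable (by simp)) x).hasDerivAt
    have h := intervalIntegral.integral_mul_deriv_eq_deriv_mul hu hv
      (continuous_const.intervalIntegrable _ _) (hg.intervalIntegrable _ _)
    rw [h]
    have hval : β (2*Real.pi) = β 0 := by simpa using hβp 0
    rw [hval]
    simp only [one_mul]
    rw [← two_pi_fc_zero β]
    push_cast
    ring
  have hv3 : (∫ θ in (0:ℝ)..(2*Real.pi), (Complex.I*(n:ℂ))*α θ)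
      = Complex.I*(n:ℂ)*(2*(Real.pi:ℂ) * fc α 0) := by
    rw [intervalIntegral.integral_const_mul, ← two_pi_fc_zero α]
  have hv4 := int_alpha_dbeta α β hα' hβ' hαp hβp
  rw [hsplit, hv1, hv2, hv3, hv4]
  have h2piI : (2*(Real.pi:ℂ)*Complex.I) ≠ 0 :=
    mul_ne_zero (mul_ne_zero two_ne_zero (Complex.ofReal_ne_zero.mpr Real.pi_ne_zero))
      Complex.I_ne_zero
  set S := ∑' k : ℤ, (k:ℂ) * fc α (-k) * fc β k with hS
  have hE : (2*(Real.pi:ℂ)*Complex.I)⁻¹ *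
      ((Complex.I*(m:ℂ)*(Complex.I*(n:ℂ))) * ((2*Real.pi)^2/2 : ℝ)
        + (Complex.I*(m:ℂ)*((2*Real.pi:ℝ)*β 0 - (2*(Real.pi:ℂ)) * fc β 0)
          + (Complex.I*(n:ℂ)*(2*(Real.pi:ℂ) * fc α 0) + 2*(Real.pi:ℂ)*Complex.I*S))
        - 2*(Real.pi:ℂ)*Complex.I*(m:ℂ)*β 0)
      = ((m*n:ℤ):ℂ) * ((Real.pi:ℂ)*Complex.I)
        + ((n:ℂ) * fc α 0 - (m:ℂ) * fc β 0 + S) := by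
    rw [inv_mul_eq_div, div_eq_iff h2piI]
    push_cast
    ring
  rw [hE, Complex.exp_add, Complex.exp_int_mul, Complex.exp_pi_mul_I]

end
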